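/- arXiv:1203.2790 — 2 statements merged into one kernel-verified Lean document; each statement's English description precedes it below -/
import Mathlib

section
/- Under the linearity condition, the projection identity E(ψᵀX | ηᵀX) = ψᵀ P_η(Σ)ᵀ X holds, where P_η(Σ) = η(ηᵀΣη)⁻¹ηᵀΣ is the projection onto span(η) with respect to the Σ inner product. In particular, P_η(Σ) is idempotent: P_η(Σ)² = P_η(Σ). -/
/-!
Write `E(X | ηᵀX) = A ηᵀX + b`. Integrating gives `b = 0` because `X` is centred. Since `ηᵀX` is
measurable for the conditioning σ-algebra, the pull-out property gives
`E(ηᵀX Xᵀ) = E(ηᵀX E(X | ηᵀX)ᵀ)`, i.e. the normal equations `ηᵀΣ = ηᵀΣη Aᵀ`. Hence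
`Aᵀ = (ηᵀΣη)⁻¹ηᵀΣ` and `η Aᵀ = P_η(Σ)`, so `E(ψᵀX | ηᵀX) = ψᵀ A ηᵀ X = ψᵀ P_η(Σ)ᵀ X`.
-/

open MeasureTheory Matrix

section RandomVector

variable {Ω ι : Type*} [Fintype ι] {m mΩ : MeasurableSpace Ω} {μ : Measure Ω} {X : Ω → ι → ℝ}

noncomputable def secondMoment (μ : Measure Ω) (X : Ω → ι → ℝ) : Matrix ι ι ℝ :=
  of fun i j => ∫ ω, X ω i * X ω j ∂μ

-- A non-integrable function has integral `0` in Lean, so `∫ f * f ≠ 0` already forces `f ∈ L²`.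
lemma memLp_two_of_integral_mul_self_ne_zero {f : Ω → ℝ} (hf : AEStronglyMeasurable f μ)
    (h : ∫ ω, f ω * f ω ∂μ ≠ 0) : MemLp f 2 μ := by
  rw [memLp_two_iff_integrable_sq hf]
  by_contra hf2
  simp only [← sq] at h
  exact h (integral_undef hf2)

lemma memLp_dotProduct {q : ENNReal} (hX : ∀ i, MemLp (fun ω => X ω i) q μ) (u : ι → ℝ) :
    MemLp (fun ω => u ⬝ᵥ X ω) q μ :=
  memLp_finsetSum _ fun i _ => (hX i).const_mul (u i)

lemma integral_mulVec {κ : Type*} [Fintype κ] (hX : Integrable X μ) (B : Matrix κ ι ℝ) :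
    ∫ ω, B *ᵥ X ω ∂μ = B *ᵥ ∫ ω, X ω ∂μ :=
  (mulVecLin B).toContinuousLinearMap.integral_comp_comm hX

lemma integral_dotProduct_mul_dotProduct (hX : ∀ i, MemLp (fun ω => X ω i) 2 μ)
    (u v : ι → ℝ) :
    ∫ ω, (u ⬝ᵥ X ω) * (v ⬝ᵥ X ω) ∂μ = u ⬝ᵥ secondMoment μ X *ᵥ v := by
  have hint : ∀ i j, Integrable (fun ω => u i * v j * (X ω i * X ω j)) μ := fun i j =>
    ((hX i).integrable_mul (hX j)).const_mul _
  have hexpand : ∀ ω, (u ⬝ᵥ X ω) * (v ⬝ᵥ X ω) = ∑ i, ∑ j, u i * v j * (X ω i * X ω j) := by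
    intro ω
    simp only [dotProduct, Finset.sum_mul_sum]
    exact Finset.sum_congr rfl fun i _ => Finset.sum_congr rfl fun j _ => by ring
  simp only [hexpand]
  simp only [dotProduct, mulVec, secondMoment, of_apply, Finset.mul_sum]
  rw [integral_finsetSum _ fun i _ => integrable_finsetSum _ fun j _ => hint i j]
  refine Finset.sum_congr rfl fun i _ => ?_
  rw [integral_finsetSum _ fun j _ => hint i j]
  refine Finset.sum_congr rfl fun j _ => ?_
  rw [integral_const_mul]
  ring

lemma condExp_dotProduct (hX : Integrable X μ) (u : ι → ℝ) :
    μ[fun ω => u ⬝ᵥ X ω | m] =ᵐ[μ] fun ω => u ⬝ᵥ μ[X | m] ω :=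
  ((dotProductBilin ℝ ℝ u).toContinuousLinearMap.comp_condExp_comm hX).symm

lemma integral_mul_condExp (hm : m ≤ mΩ) [SigmaFinite (μ.trim hm)] {f g : Ω → ℝ}
    (hf : StronglyMeasurable[m] f) (hfg : Integrable (f * g) μ) (hg : Integrable g μ) :
    ∫ ω, f ω * μ[g | m] ω ∂μ = ∫ ω, f ω * g ω ∂μ := by
  rw [← integral_condExp hm (f := fun ω => f ω * g ω)]
  exact (integral_congr_ae (condExp_mul_of_stronglyMeasurable_left hf hfg hg)).symm

end RandomVector

section LinearConditionalExpectation

variable {Ω ι : Type*} [Fintype ι] {m mΩ : MeasurableSpace Ω} {μ : Measure Ω} {X : Ω → ι → ℝ}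
  {B : Matrix ι ι ℝ}

lemma eq_zero_of_condExp_ae_eq_mulVec_add [IsProbabilityMeasure μ] (hm : m ≤ mΩ)
    (hX : Integrable X μ) (hmean : ∫ ω, X ω ∂μ = 0) {c : ι → ℝ}
    (h : μ[X | m] =ᵐ[μ] fun ω => B *ᵥ X ω + c) : c = 0 :=
  calc c = ∫ ω, (B *ᵥ X ω + c) ∂μ := by
        have hBX : Integrable (fun ω => B *ᵥ X ω) μ :=
          (mulVecLin B).toContinuousLinearMap.integrable_comp hX
        rw [integral_add hBX (integrable_const c), integral_mulVec hX, hmean]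
        simp
    _ = ∫ ω, μ[X | m] ω ∂μ := (integral_congr_ae h).symm
    _ = 0 := (integral_condExp hm).trans hmean

variable [IsFiniteMeasure μ]

lemma vecMul_secondMoment_mul_transpose (hm : m ≤ mΩ)
    (hX : ∀ i, MemLp (fun ω => X ω i) 2 μ) (h : μ[X | m] =ᵐ[μ] fun ω => B *ᵥ X ω)
    {u : ι → ℝ} (hu : StronglyMeasurable[m] fun ω => u ⬝ᵥ X ω) :
    u ᵥ* (secondMoment μ X * Bᵀ) = u ᵥ* secondMoment μ X := by
  have hXint : Integrable X μ := Integrable.of_eval fun i => (hX i).integrable one_le_two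
  refine dotProduct_eq _ _ fun v => ?_
  have hcond : μ[fun ω => v ⬝ᵥ X ω | m] =ᵐ[μ] fun ω => (Bᵀ *ᵥ v) ⬝ᵥ X ω := by
    filter_upwards [condExp_dotProduct hXint v, h] with ω h1 h2
    rw [h1, h2, dotProduct_mulVec, mulVec_transpose]
  calc (u ᵥ* (secondMoment μ X * Bᵀ)) ⬝ᵥ v
      = ∫ ω, (u ⬝ᵥ X ω) * ((Bᵀ *ᵥ v) ⬝ᵥ X ω) ∂μ := by
        rw [integral_dotProduct_mul_dotProduct hX, mulVec_mulVec, dotProduct_mulVec]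
    _ = ∫ ω, (u ⬝ᵥ X ω) * μ[fun ω => v ⬝ᵥ X ω | m] ω ∂μ :=
        integral_congr_ae (by filter_upwards [hcond] with ω hω; rw [hω])
    _ = ∫ ω, (u ⬝ᵥ X ω) * (v ⬝ᵥ X ω) ∂μ :=
        integral_mul_condExp hm hu ((memLp_dotProduct hX u).integrable_mul (memLp_dotProduct hX v))
          ((memLp_dotProduct hX v).integrable one_le_two)
    _ = (u ᵥ* secondMoment μ X) ⬝ᵥ v := by
        rw [integral_dotProduct_mul_dotProduct hX, dotProduct_mulVec]

lemma mul_secondMoment_mul_transpose {κ : Type*} [Fintype κ] (hm : m ≤ mΩ)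
    (hX : ∀ i, MemLp (fun ω => X ω i) 2 μ) (h : μ[X | m] =ᵐ[μ] fun ω => B *ᵥ X ω)
    {U : Matrix κ ι ℝ} (hU : Measurable[m] fun ω => U *ᵥ X ω) :
    U * secondMoment μ X * Bᵀ = U * secondMoment μ X := by
  refine ext_iff_vecMul.2 fun φ => ?_
  have hu : StronglyMeasurable[m] fun ω => (φ ᵥ* U) ⬝ᵥ X ω := by
    simp only [← dotProduct_mulVec]
    exact ((continuous_const.dotProduct continuous_id).measurable.comp hU).stronglyMeasurable
  simpa only [vecMul_vecMul, Matrix.mul_assoc] using vecMul_secondMoment_mul_transpose hm hX h hu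

end LinearConditionalExpectation

lemma isIdempotentElem_mul_inv_mul {R n k : Type*} [CommRing R] [Fintype n] [Fintype k]
    [DecidableEq k] {B : Matrix n k R} {C : Matrix k n R} (h : IsUnit (C * B).det) :
    IsIdempotentElem (B * (C * B)⁻¹ * C) :=
  calc B * (C * B)⁻¹ * C * (B * (C * B)⁻¹ * C)
      = B * ((C * B)⁻¹ * (C * B)) * (C * B)⁻¹ * C := by simp only [Matrix.mul_assoc]
    _ = B * (C * B)⁻¹ * C := by rw [nonsing_inv_mul _ h, Matrix.mul_one]

theorem projection_identity_general {p d : ℕ} {Ω : Type*} [mΩ : MeasurableSpace Ω]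
    (μ : Measure Ω) [IsProbabilityMeasure μ]
    (X : Ω → Fin p → ℝ) (hX : Measurable X)
    (S : Matrix (Fin p) (Fin p) ℝ)
    (hScov : ∀ i j, S i j = ∫ ω, X ω i * X ω j ∂μ)
    (hmean : ∀ i, ∫ ω, X ω i ∂μ = 0)
    (hSpd : S.PosDef)
    (η : Matrix (Fin p) (Fin d) ℝ)
    (hinv : IsUnit (η.transpose * S * η).det)
    (G : MeasurableSpace Ω)
    (hG : G = MeasurableSpace.comap (fun ω => η.transpose.mulVec (X ω)) inferInstance)
    (hGle : G ≤ mΩ)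
    (hlin : ∃ (A : Matrix (Fin p) (Fin d) ℝ) (b : Fin p → ℝ),
      μ[X | G] =ᵐ[μ] fun ω => A.mulVec (η.transpose.mulVec (X ω)) + b)
    (P : Matrix (Fin p) (Fin p) ℝ)
    (hP : P = η * (η.transpose * S * η)⁻¹ * η.transpose * S) :
    (∀ ψ : Fin p → ℝ,
      μ[(fun ω => ψ ⬝ᵥ X ω) | G] =ᵐ[μ] fun ω => ψ ⬝ᵥ P.transpose.mulVec (X ω)) ∧
    P * P = P := by
  obtain ⟨A, b, hlin⟩ := hlin
  have hS : S = secondMoment μ X := ext hScov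
  have hL2 : ∀ i, MemLp (fun ω => X ω i) 2 μ := fun i =>
    memLp_two_of_integral_mul_self_ne_zero ((measurable_pi_apply i).comp hX).aestronglyMeasurable
      (hScov i i ▸ hSpd.diag_pos.ne')
  have hint : ∀ i, Integrable (fun ω => X ω i) μ := fun i => (hL2 i).integrable one_le_two
  have hXint : Integrable X μ := Integrable.of_eval hint
  have hlinX : μ[X | G] =ᵐ[μ] fun ω => (A * ηᵀ) *ᵥ X ω + b := by
    simpa only [mulVec_mulVec] using hlin
  obtain rfl : b = 0 := eq_zero_of_condExp_ae_eq_mulVec_add hGle hXint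
    (funext fun i => (eval_integral hint i).trans (hmean i)) hlinX
  simp only [add_zero] at hlinX
  have hnormal : ηᵀ * S * η * Aᵀ = ηᵀ * S := by
    have h := mul_secondMoment_mul_transpose hGle hL2 hlinX (hG ▸ comap_measurable _)
    rw [← hS, transpose_mul, transpose_transpose] at h
    simpa only [Matrix.mul_assoc] using h
  have hAT : Aᵀ = (ηᵀ * S * η)⁻¹ * (ηᵀ * S) :=
    calc Aᵀ = (ηᵀ * S * η)⁻¹ * (ηᵀ * S * η * Aᵀ) := by
          rw [← Matrix.mul_assoc, nonsing_inv_mul _ hinv, Matrix.one_mul]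
      _ = (ηᵀ * S * η)⁻¹ * (ηᵀ * S) := by rw [hnormal]
  have hPA : P = η * Aᵀ := by
    rw [hP, hAT]
    simp only [Matrix.mul_assoc]
  refine ⟨fun ψ => ?_, ?_⟩
  · filter_upwards [condExp_dotProduct hXint ψ, hlinX] with ω h1 h2
    rw [h1, h2, hPA, transpose_mul, transpose_transpose]
  · rw [show P = η * (ηᵀ * S * η)⁻¹ * (ηᵀ * S) by rw [hP, Matrix.mul_assoc _ ηᵀ S]]
    exact (isIdempotentElem_mul_inv_mul hinv).eq

/-- Under the linearity condition (with `E X = 0`), the projection identity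
`E(ψᵀX | ηᵀX) = ψᵀ P_η(Σ)ᵀ X` holds with `P_η(Σ) = η(ηᵀΣη)⁻¹ηᵀΣ`, and `P_η(Σ)` is
idempotent. -/
theorem projection_identity {p d : ℕ} {Ω : Type*} [mΩ : MeasurableSpace Ω]
    (μ : Measure Ω) [IsProbabilityMeasure μ]
    (X : Ω → Fin p → ℝ) (hX : Measurable X)
    (S : Matrix (Fin p) (Fin p) ℝ)
    (hScov : ∀ i j, S i j = ∫ ω, X ω i * X ω j ∂μ)
    (hmean : ∀ i, ∫ ω, X ω i ∂μ = 0)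
    (hSpd : S.PosDef)
    (η : Matrix (Fin p) (Fin d) ℝ) (hrank : η.rank = d)
    (hinv : IsUnit (η.transpose * S * η).det)
    (G : MeasurableSpace Ω)
    (hG : G = MeasurableSpace.comap (fun ω => η.transpose.mulVec (X ω)) inferInstance)
    (hGle : G ≤ mΩ)
    (hlin : ∃ (A : Matrix (Fin p) (Fin d) ℝ) (b : Fin p → ℝ),
      μ[X | G] =ᵐ[μ] fun ω => A.mulVec (η.transpose.mulVec (X ω)) + b)
    (P : Matrix (Fin p) (Fin p) ℝ)
    (hP : P = η * (η.transpose * S * η)⁻¹ * η.transpose * S) :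
    (∀ ψ : Fin p → ℝ,
      μ[(fun ω => ψ ⬝ᵥ X ω) | G] =ᵐ[μ] fun ω => ψ ⬝ᵥ P.transpose.mulVec (X ω)) ∧
    P * P = P :=
  projection_identity_general (mΩ := mΩ) μ X hX S hScov hmean hSpd η hinv G hG hGle hlin P hP
end

section
/- Let Gₙ(k) = Σᵢ₌₁ᵏ λᵢ(M̂ₙ) − c₁(n)c₂(k), where λᵢ(M̂ₙ) are the eigenvalues of M̂ₙ in decreasing order, M̂ₙ → M₀ in probability at rate O_P(n^{−1/2}), rank(M₀) = d, c₁(n) > 0 a.s., c₁(n) → 0 in probability, n^{1/2}c₁(n) → ∞ in probability, and c₂ is strictly increasing. Then the maximizer d̂ of Gₙ(k) over k ∈ {0, …, p} satisfies P(d̂ = d) → 1 as n → ∞. -/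
/-!
Weyl's inequality, proved by the Courant–Fischer dimension count, bounds every sorted eigenvalue
of `M̂ₙ` within `δₙ = ‖M̂ₙ - M₀‖ = O_P(n^{-1/2})` of the corresponding eigenvalue of `M₀`. Hence
the top `d` eigenvalues of `M̂ₙ` stay above half the smallest positive eigenvalue `m` of `M₀`,
while the others are at most `δₙ`. Comparing `Gₙ(k)` with `Gₙ(d)`: for `k < d` the gain of at
least `m/2` beats the penalty `c₁(n)(c₂ d - c₂ 0) → 0`; for `k > d` the gain of at most `p δₙ` is
beaten by the penalty `c₁(n)(c₂ (d+1) - c₂ d)`, because `√n c₁(n) → ∞` while `√n δₙ = O_P(1)`.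
-/

open MeasureTheory Matrix Filter Finset Module Submodule Topology
open scoped RealInnerProductSpace

lemma OrthonormalBasis.finrank_span_image {ι 𝕜 E : Type*} [RCLike 𝕜] [NormedAddCommGroup E]
    [InnerProductSpace 𝕜 E] [Fintype ι] (b : OrthonormalBasis ι 𝕜 E) (s : Finset ι) :
    finrank 𝕜 (span 𝕜 (b '' s)) = #s := by
  have hli := b.orthonormal.linearIndependent.comp ((↑) : s → ι) Subtype.val_injective
  rw [Set.image_eq_range, ← Fintype.card_coe]
  exact finrank_span_eq_card hli

lemma Submodule.exists_mem_inf_ne_zero_of_finrank_lt {K V : Type*} [DivisionRing K]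
    [AddCommGroup V] [Module K V] [FiniteDimensional K V] {U W : Submodule K V}
    (h : finrank K V < finrank K U + finrank K W) : ∃ v ∈ U, v ∈ W ∧ v ≠ 0 := by
  by_contra! hUW
  exact h.not_ge (finrank_add_finrank_le_of_disjoint (disjoint_def.2 hUW))

section Eigenbasis

variable {E : Type*} [NormedAddCommGroup E] [InnerProductSpace ℝ E] {n : ℕ}
  {T : E →ₗ[ℝ] E} {b : OrthonormalBasis (Fin n) ℝ E} {w : Fin n → ℝ}

lemma inner_map_self_eq_sum (hb : ∀ i, T (b i) = w i • b i) (v : E) :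
    ⟪v, T v⟫ = ∑ j, w j * b.repr v j ^ 2 := by
  conv_lhs => arg 3; rw [← b.sum_repr v]
  simp only [map_sum, map_smul, hb, inner_sum, inner_smul_right]
  refine sum_congr rfl fun j _ => ?_
  rw [real_inner_comm, ← b.repr_apply_apply]
  ring

lemma le_inner_map_self_of_mem_span (hb : ∀ i, T (b i) = w i • b i) {s : Set (Fin n)} {a : ℝ}
    (ha : ∀ j ∈ s, a ≤ w j) {v : E} (hv : v ∈ span ℝ (b '' s)) :
    a * ‖v‖ ^ 2 ≤ ⟪v, T v⟫ := by
  rw [inner_map_self_eq_sum hb, ← b.sum_sq_norm_inner_right, mul_sum]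
  refine sum_le_sum fun j _ => ?_
  rw [Real.norm_eq_abs, sq_abs, ← b.repr_apply_apply]
  by_cases hj : j ∈ s
  · exact mul_le_mul_of_nonneg_right (ha j hj) (sq_nonneg _)
  · rw [← b.coe_toBasis, Basis.mem_span_image] at hv
    have : b.repr v j = 0 := by simpa using mt (@hv j) hj
    simp [this]

lemma inner_map_self_le_of_mem_span (hb : ∀ i, T (b i) = w i • b i) {s : Set (Fin n)} {a : ℝ}
    (ha : ∀ j ∈ s, w j ≤ a) {v : E} (hv : v ∈ span ℝ (b '' s)) :
    ⟪v, T v⟫ ≤ a * ‖v‖ ^ 2 := by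
  have := le_inner_map_self_of_mem_span (T := -T) (w := -w) (a := -a) (by simp [hb])
    (by simpa using ha) hv
  simp only [LinearMap.neg_apply, inner_neg_right] at this
  linarith

/-- The span of the top `i + 1` eigenvectors of `T` meets the span of the bottom `n - i`
eigenvectors of `S` in a nonzero vector. -/
lemma eigenvalue_le_add_of_inner_le {S : E →ₗ[ℝ] E} {b' : OrthonormalBasis (Fin n) ℝ E}
    {w' : Fin n → ℝ} (hb : ∀ i, T (b i) = w i • b i) (hw : Antitone w)
    (hb' : ∀ i, S (b' i) = w' i • b' i) (hw' : Antitone w') {δ : ℝ}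
    (h : ∀ v, ⟪v, T v⟫ ≤ ⟪v, S v⟫ + δ * ‖v‖ ^ 2) (i : Fin n) : w i ≤ w' i + δ := by
  have : FiniteDimensional ℝ E := b.toBasis.finiteDimensional_of_finite
  obtain ⟨v, hvT, hvS, hv0⟩ := exists_mem_inf_ne_zero_of_finrank_lt
    (U := span ℝ (b '' (Iic i : Set (Fin n)))) (W := span ℝ (b' '' (Ici i : Set (Fin n)))) (by
      rw [b.finrank_span_image, b'.finrank_span_image, finrank_eq_card_basis b.toBasis,
        Fin.card_Iic, Fin.card_Ici, Fintype.card_fin]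
      omega)
  have hT := le_inner_map_self_of_mem_span hb (a := w i) (fun j hj => hw (by simpa using hj)) hvT
  have hS := inner_map_self_le_of_mem_span hb' (a := w' i)
    (fun j hj => hw' (by simpa using hj)) hvS
  have hv : 0 < ‖v‖ ^ 2 := by positivity
  nlinarith [h v]

lemma abs_inner_map_self_sub_le (T S : E →L[ℝ] E) (v : E) :
    |⟪v, T v⟫ - ⟪v, S v⟫| ≤ ‖T - S‖ * ‖v‖ ^ 2 := by
  rw [← inner_sub_right, ← _root_.sub_apply]
  calc |⟪v, (T - S) v⟫| ≤ ‖v‖ * ‖(T - S) v‖ := abs_real_inner_le_norm _ _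
    _ ≤ ‖v‖ * (‖T - S‖ * ‖v‖) := by gcongr; exact (T - S).le_opNorm v
    _ = ‖T - S‖ * ‖v‖ ^ 2 := by ring

lemma abs_eigenvalue_sub_le_opNorm {T S : E →L[ℝ] E} {b' : OrthonormalBasis (Fin n) ℝ E}
    {w' : Fin n → ℝ} (hb : ∀ i, T (b i) = w i • b i) (hw : Antitone w)
    (hb' : ∀ i, S (b' i) = w' i • b' i) (hw' : Antitone w') (i : Fin n) :
    |w i - w' i| ≤ ‖T - S‖ := by
  have h := abs_inner_map_self_sub_le T S
  rw [abs_sub_le_iff]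
  constructor
  · have := eigenvalue_le_add_of_inner_le (T := T.toLinearMap) (S := S.toLinearMap)
      (δ := ‖T - S‖) hb hw hb' hw' (fun v => by
        simp only [ContinuousLinearMap.coe_coe]; linarith [abs_le.1 (h v)]) i
    linarith
  · have := eigenvalue_le_add_of_inner_le (T := S.toLinearMap) (S := T.toLinearMap)
      (δ := ‖T - S‖) hb' hw' hb hw (fun v => by
        simp only [ContinuousLinearMap.coe_coe]; linarith [abs_le.1 (h v)]) i
    linarith

end Eigenbasis

lemma Matrix.IsHermitian.toEuclideanCLM_eigenvectorBasis {ι : Type*} [Fintype ι] [DecidableEq ι]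
    {M : Matrix ι ι ℝ} (hM : M.IsHermitian) (i : ι) :
    toEuclideanCLM (𝕜 := ℝ) M (hM.eigenvectorBasis i) =
      hM.eigenvalues i • hM.eigenvectorBasis i := by
  apply (WithLp.equiv 2 (ι → ℝ)).injective
  simpa [toLpLin_apply] using hM.mulVec_eigenvectorBasis i

lemma Matrix.IsHermitian.abs_sub_le_norm_toEuclideanCLM_sub {p : ℕ}
    {A B : Matrix (Fin p) (Fin p) ℝ} (hA : A.IsHermitian) (hB : B.IsHermitian) {a b : Fin p → ℝ}
    (ha : Antitone a) (haA : ∃ σ : Equiv.Perm (Fin p), a = hA.eigenvalues ∘ σ)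
    (hb : Antitone b) (hbB : ∃ τ : Equiv.Perm (Fin p), b = hB.eigenvalues ∘ τ) (i : Fin p) :
    |a i - b i| ≤ ‖toEuclideanCLM (𝕜 := ℝ) (A - B)‖ := by
  obtain ⟨σ, rfl⟩ := haA
  obtain ⟨τ, rfl⟩ := hbB
  rw [map_sub]
  exact abs_eigenvalue_sub_le_opNorm (b := hA.eigenvectorBasis.reindex σ.symm)
    (b' := hB.eigenvectorBasis.reindex τ.symm)
    (fun j => by simpa using hA.toEuclideanCLM_eigenvectorBasis (σ j)) ha
    (fun j => by simpa using hB.toEuclideanCLM_eigenvectorBasis (τ j)) hb i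

lemma Antitone.pos_iff_lt_card_ne_zero {p : ℕ} {w : Fin p → ℝ} (hw : Antitone w)
    (h0 : ∀ i, 0 ≤ w i) (i : Fin p) : 0 < w i ↔ (i : ℕ) < #{j | w j ≠ 0} := by
  constructor
  · intro hi
    have hsub : Iic i ⊆ ({j | w j ≠ 0} : Finset _) := fun j hj =>
      mem_filter.2 ⟨mem_univ j, (hi.trans_le (hw (mem_Iic.1 hj))).ne'⟩
    simpa using card_le_card hsub
  · intro hi
    by_contra! hwi
    have hsub : ({j | w j ≠ 0} : Finset _) ⊆ Iio i := fun j hj =>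
      mem_Iio.2 <| lt_of_not_ge fun hij =>
        (mem_filter.1 hj).2 (le_antisymm ((hw hij).trans hwi) (h0 j))
    simpa using (card_le_card hsub).trans_lt' hi

lemma Matrix.PosSemidef.exists_pos_le_of_rank {p d : ℕ} {M : Matrix (Fin p) (Fin p) ℝ}
    (hM : M.PosSemidef) (hrank : M.rank = d) {a : Fin p → ℝ} (ha : Antitone a)
    (haM : ∃ σ : Equiv.Perm (Fin p), a = hM.1.eigenvalues ∘ σ) :
    ∃ m > 0, (∀ i : Fin p, (i : ℕ) < d → m ≤ a i) ∧ ∀ i : Fin p, d ≤ (i : ℕ) → a i = 0 := by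
  obtain ⟨σ, rfl⟩ := haM
  have h0 (i : Fin p) : 0 ≤ hM.1.eigenvalues (σ i) := hM.eigenvalues_nonneg _
  have hcard : #{j | (hM.1.eigenvalues ∘ σ) j ≠ 0} = d := by
    rw [← hrank, hM.1.rank_eq_card_non_zero_eigs, ← Fintype.card_subtype]
    exact Fintype.card_congr (Equiv.subtypeEquiv σ fun j => Iff.rfl)
  have hpos := ha.pos_iff_lt_card_ne_zero h0
  rw [hcard] at hpos
  have hzero (i : Fin p) (hi : d ≤ (i : ℕ)) : (hM.1.eigenvalues ∘ σ) i = 0 :=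
    le_antisymm (not_lt.1 fun h => ((hpos i).1 h).not_ge hi) (h0 i)
  rcases Nat.eq_zero_or_pos d with rfl | hd
  · exact ⟨1, one_pos, fun i hi => absurd hi (Nat.not_lt_zero _), hzero⟩
  · have hdp : d ≤ p := hcard ▸ (card_filter_le _ _).trans_eq (card_fin p)
    exact ⟨_, (hpos ⟨d - 1, by omega⟩).2 (by simp; omega),
      fun i hi => ha (by rw [Fin.le_def]; simp; omega), hzero⟩

section PenalizedSum

variable {p d : ℕ} {a : Fin p → ℝ} {c : ℝ} {c₂ : ℕ → ℝ}

lemma sum_ite_lt_sub_sum_ite_lt (a : Fin p → ℝ) {k l : ℕ} (hkl : k ≤ l) :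
    (∑ i : Fin p, if (i : ℕ) < l then a i else 0) - (∑ i : Fin p, if (i : ℕ) < k then a i else 0)
      = ∑ i : Fin p, if k ≤ (i : ℕ) ∧ (i : ℕ) < l then a i else 0 := by
  rw [← sum_sub_distrib]
  refine sum_congr rfl fun i _ => ?_
  split_ifs <;> first | (exfalso; omega) | ring

lemma penalized_sum_lt_of_lt (hdp : d ≤ p) (hc₂ : Monotone c₂) (hc : 0 ≤ c) {m : ℝ}
    (hm0 : 0 ≤ m) (hm : ∀ i : Fin p, (i : ℕ) < d → m ≤ a i) (hsmall : c * (c₂ d - c₂ 0) < m)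
    {k : ℕ} (hk : k < d) :
    (∑ i : Fin p, if (i : ℕ) < k then a i else 0) - c * c₂ k
      < (∑ i : Fin p, if (i : ℕ) < d then a i else 0) - c * c₂ d := by
  have hgain : m ≤ (∑ i : Fin p, if (i : ℕ) < d then a i else 0)
      - ∑ i : Fin p, if (i : ℕ) < k then a i else 0 := by
    rw [sum_ite_lt_sub_sum_ite_lt a hk.le]
    let i₀ : Fin p := ⟨k, hk.trans_le hdp⟩
    calc m ≤ if k ≤ (i₀ : ℕ) ∧ (i₀ : ℕ) < d then a i₀ else 0 := by simpa [i₀, hk] using hm i₀ hk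
      _ ≤ _ := single_le_sum (f := fun i : Fin p => if k ≤ (i : ℕ) ∧ (i : ℕ) < d then a i else 0)
          (fun i _ => by split_ifs with h; exacts [hm0.trans (hm i h.2), le_rfl]) (mem_univ i₀)
  have hpen : c * (c₂ d - c₂ k) ≤ c * (c₂ d - c₂ 0) :=
    mul_le_mul_of_nonneg_left (by linarith [hc₂ k.zero_le]) hc
  linarith

lemma penalized_sum_lt_of_gt (hc₂ : Monotone c₂) (hc : 0 ≤ c) {δ : ℝ} (hδ0 : 0 ≤ δ)
    (hδ : ∀ i : Fin p, d ≤ (i : ℕ) → a i ≤ δ) (hlarge : p * δ < c * (c₂ (d + 1) - c₂ d))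
    {k : ℕ} (hk : d < k) :
    (∑ i : Fin p, if (i : ℕ) < k then a i else 0) - c * c₂ k
      < (∑ i : Fin p, if (i : ℕ) < d then a i else 0) - c * c₂ d := by
  have hgain : (∑ i : Fin p, if (i : ℕ) < k then a i else 0)
      - (∑ i : Fin p, if (i : ℕ) < d then a i else 0) ≤ p * δ := by
    rw [sum_ite_lt_sub_sum_ite_lt a hk.le]
    calc _ ≤ ∑ _i : Fin p, δ :=
          sum_le_sum fun i _ => by split_ifs with h; exacts [hδ i h.1, hδ0]
      _ = p * δ := by simp
  have hpen : c * (c₂ (d + 1) - c₂ d) ≤ c * (c₂ k - c₂ d) :=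
    mul_le_mul_of_nonneg_left (by linarith [hc₂ (Nat.succ_le_of_lt hk)]) hc
  linarith

end PenalizedSum

lemma penalized_eigenvalue_sum_lt {p d : ℕ} (hdp : d ≤ p) {M₀ M : Matrix (Fin p) (Fin p) ℝ}
    (hM₀ : M₀.IsHermitian) (hM : M.IsHermitian) {ev : Matrix (Fin p) (Fin p) ℝ → Fin p → ℝ}
    (hev : ∀ (M : Matrix (Fin p) (Fin p) ℝ) (hM : M.IsHermitian),
      Antitone (ev M) ∧ ∃ σ : Equiv.Perm (Fin p), ev M = hM.eigenvalues ∘ σ)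
    {c₂ : ℕ → ℝ} (hc₂ : Monotone c₂) {c m : ℝ} (hc : 0 ≤ c)
    (hm : ∀ i : Fin p, (i : ℕ) < d → m ≤ ev M₀ i) (hzero : ∀ i : Fin p, d ≤ (i : ℕ) → ev M₀ i = 0)
    (hΔ : 2 * ‖toEuclideanCLM (𝕜 := ℝ) (M - M₀)‖ ≤ m) (hsmall : 2 * (c * (c₂ d - c₂ 0)) < m)
    (hlarge : p * ‖toEuclideanCLM (𝕜 := ℝ) (M - M₀)‖ < c * (c₂ (d + 1) - c₂ d))
    {k : ℕ} (hk : k ≠ d) :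
    (∑ i : Fin p, if (i : ℕ) < k then ev M i else 0) - c * c₂ k
      < (∑ i : Fin p, if (i : ℕ) < d then ev M i else 0) - c * c₂ d := by
  have hweyl (i : Fin p) := abs_le.1 <| hM.abs_sub_le_norm_toEuclideanCLM_sub hM₀
    (hev M hM).1 (hev M hM).2 (hev M₀ hM₀).1 (hev M₀ hM₀).2 i
  have hΔ0 := norm_nonneg (toEuclideanCLM (𝕜 := ℝ) (M - M₀))
  rcases lt_or_gt_of_ne hk with hk | hk
  · exact penalized_sum_lt_of_lt hdp hc₂ hc (m := m / 2) (by linarith)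
      (fun i hi => by linarith [hweyl i, hm i hi]) (by linarith) hk
  · exact penalized_sum_lt_of_gt hc₂ hc hΔ0 (fun i hi => by linarith [hweyl i, hzero i hi])
      hlarge hk

/-- Here `s` plays the role of `√n`: the hypotheses describe the event `√n ‖M̂ₙ - M₀‖ < C`,
`p C / (c₂ (d + 1) - c₂ d) < √n c₁(n)`, `|c₁(n)| < η` for large `n`. -/
lemma penalized_eigenvalue_sum_lt_of_scaled {p d : ℕ} (hdp : d ≤ p)
    {M₀ M : Matrix (Fin p) (Fin p) ℝ} (hM₀ : M₀.IsHermitian) (hM : M.IsHermitian)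
    {ev : Matrix (Fin p) (Fin p) ℝ → Fin p → ℝ}
    (hev : ∀ (M : Matrix (Fin p) (Fin p) ℝ) (hM : M.IsHermitian),
      Antitone (ev M) ∧ ∃ σ : Equiv.Perm (Fin p), ev M = hM.eigenvalues ∘ σ)
    {c₂ : ℕ → ℝ} (hc₂ : StrictMono c₂) {m s C c : ℝ}
    (hm : ∀ i : Fin p, (i : ℕ) < d → m ≤ ev M₀ i) (hzero : ∀ i : Fin p, d ≤ (i : ℕ) → ev M₀ i = 0)
    (hs : 0 < s) (hsm : 2 * C < s * m) (hΔ : s * ‖toEuclideanCLM (𝕜 := ℝ) (M - M₀)‖ < C)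
    (hK : p * C / (c₂ (d + 1) - c₂ d) < s * c) (hη : |c| < m / (2 * (c₂ d - c₂ 0 + 1)))
    {k : ℕ} (hk : k ≠ d) :
    (∑ i : Fin p, if (i : ℕ) < k then ev M i else 0) - c * c₂ k
      < (∑ i : Fin p, if (i : ℕ) < d then ev M i else 0) - c * c₂ d := by
  have hβ : 0 < c₂ (d + 1) - c₂ d := sub_pos.2 (hc₂ d.lt_succ_self)
  have hB : 0 ≤ c₂ d - c₂ 0 := sub_nonneg.2 (hc₂.monotone d.zero_le)
  replace hK := (div_lt_iff₀ hβ).1 hK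
  replace hη := (lt_div_iff₀ (by positivity)).1 hη
  have hp : (0 : ℝ) ≤ p := p.cast_nonneg
  have hΔ0 := norm_nonneg (toEuclideanCLM (𝕜 := ℝ) (M - M₀))
  have hlarge : p * ‖toEuclideanCLM (𝕜 := ℝ) (M - M₀)‖ < c * (c₂ (d + 1) - c₂ d) := by
    nlinarith
  have hc : 0 ≤ c := by nlinarith
  exact penalized_eigenvalue_sum_lt hdp hM₀ hM hev hc₂.monotone hc hm hzero (by nlinarith)
    (by nlinarith [le_abs_self c]) hlarge hk

lemma measureReal_sub_sub_le_of_subset_union {Ω : Type*} [MeasurableSpace Ω] {μ : Measure Ω}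
    [IsFiniteMeasure μ] {s t u v : Set Ω} (h : s ⊆ t ∪ u ∪ v) :
    μ.real s - μ.real u - μ.real v ≤ μ.real t := by
  linarith [measureReal_mono (μ := μ) h, measureReal_union_le (μ := μ) (t ∪ u) v,
    measureReal_union_le (μ := μ) t u]

lemma tendsto_measureReal_one_of_forall_eventually_ge {Ω : Type*} [MeasurableSpace Ω]
    {μ : Measure Ω} [IsProbabilityMeasure μ] {s : ℕ → Set Ω}
    (h : ∀ ε > 0, ∀ᶠ n in atTop, 1 - ε ≤ μ.real (s n)) :
    Tendsto (fun n => μ.real (s n)) atTop (𝓝 1) := by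
  refine tendsto_order.2
    ⟨fun a ha => ?_, fun a ha => .of_forall fun n => measureReal_le_one.trans_lt ha⟩
  filter_upwards [h ((1 - a) / 2) (by linarith)] with n hn
  linarith

theorem bic_order_determination_consistent_general {Ω : Type*} [MeasurableSpace Ω]
    (μ : Measure Ω) [IsProbabilityMeasure μ]
    (p d : ℕ) (hdp : d ≤ p)
    (Mhat : ℕ → Ω → Matrix (Fin p) (Fin p) ℝ) (M₀ : Matrix (Fin p) (Fin p) ℝ)
    (hM₀ : M₀.PosSemidef) (hrank : M₀.rank = d)
    (hMhat : ∀ n ω, (Mhat n ω).PosSemidef)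
    (hOP : ∀ ε : ℝ, 0 < ε → ∃ C : ℝ, ∀ᶠ n : ℕ in atTop,
      (μ {ω | C ≤ Real.sqrt (n : ℝ) *
        ‖Matrix.toEuclideanCLM (𝕜 := ℝ) (Mhat n ω - M₀)‖}).toReal ≤ ε)
    (ev : Matrix (Fin p) (Fin p) ℝ → Fin p → ℝ)
    (hev : ∀ (M : Matrix (Fin p) (Fin p) ℝ) (hM : M.IsHermitian),
      Antitone (ev M) ∧ ∃ σ : Equiv.Perm (Fin p), ev M = hM.eigenvalues ∘ σ)
    (c₁ : ℕ → Ω → ℝ)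
    (hc₁zero : ∀ ε : ℝ, 0 < ε →
      Tendsto (fun n => (μ {ω | ε ≤ |c₁ n ω|}).toReal) atTop (nhds 0))
    (hc₁inf : ∀ K : ℝ,
      Tendsto (fun n : ℕ => (μ {ω | K < Real.sqrt (n : ℝ) * c₁ n ω}).toReal) atTop (nhds 1))
    (c₂ : ℕ → ℝ) (hc₂ : StrictMono c₂)
    (G : ℕ → Ω → ℕ → ℝ)
    (hG : ∀ n ω kk, G n ω kk =
      (∑ i : Fin p, if (i : ℕ) < kk then ev (Mhat n ω) i else 0) - c₁ n ω * c₂ kk)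
    (dhat : ℕ → Ω → ℕ)
    (hdhat : ∀ n ω, dhat n ω ≤ p ∧ ∀ kk ≤ p, G n ω kk ≤ G n ω (dhat n ω)) :
    Tendsto (fun n => (μ {ω | dhat n ω = d}).toReal) atTop (nhds 1) := by
  obtain ⟨m, hm0, hm, hzero⟩ := hM₀.exists_pos_le_of_rank hrank (hev M₀ hM₀.1).1 (hev M₀ hM₀.1).2
  have hB : 0 ≤ c₂ d - c₂ 0 := sub_nonneg.2 (hc₂.monotone d.zero_le)
  refine tendsto_measureReal_one_of_forall_eventually_ge fun ε hε => ?_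
  obtain ⟨C, hC⟩ := hOP (ε / 3) (by positivity)
  set K := p * C / (c₂ (d + 1) - c₂ d)
  set η := m / (2 * (c₂ d - c₂ 0 + 1))
  have hsqrt : Tendsto (fun n : ℕ => √(n : ℝ)) atTop atTop :=
    Real.tendsto_sqrt_atTop.comp tendsto_natCast_atTop_atTop
  filter_upwards [hC, (hc₁inf K).eventually (lt_mem_nhds (show 1 - ε / 3 < 1 by linarith)),
    (hc₁zero η (by positivity)).eventually (gt_mem_nhds (show 0 < ε / 3 by linarith)),
    hsqrt.eventually_gt_atTop 0, (hsqrt.atTop_mul_const hm0).eventually_gt_atTop (2 * C)]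
    with n hnC hnK hnη hs hsm
  -- These sets need not be measurable, so we cover the likely event rather than take complements.
  have hsub : {ω | K < √n * c₁ n ω} ⊆ {ω | dhat n ω = d} ∪
      {ω | C ≤ √n * ‖toEuclideanCLM (𝕜 := ℝ) (Mhat n ω - M₀)‖} ∪ {ω | η ≤ |c₁ n ω|} := by
    intro ω hK
    by_contra hω
    simp only [Set.mem_union, Set.mem_ofPred_eq, not_or, not_le] at hω hK
    obtain ⟨⟨hne, hΔ⟩, hη⟩ := hω
    have hlt := penalized_eigenvalue_sum_lt_of_scaled hdp hM₀.1 (hMhat n ω).1 hev hc₂ hm hzero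
      hs hsm hΔ hK hη hne
    have hmax := (hdhat n ω).2 d hdp
    rw [hG, hG] at hmax
    linarith
  simp only [← measureReal_def] at hnC hnK hnη ⊢
  linarith [measureReal_sub_sub_le_of_subset_union (μ := μ) hsub]

/-- Theorem 8 (consistency of the BIC-type order-determination criterion):
if `√n(M̂ₙ − M₀) = O_P(1)`, `rank M₀ = d`, `c₁(n) > 0` a.s., `c₁(n) → 0` in
probability, `√n c₁(n) → ∞` in probability, and `c₂` is increasing, then the
maximizer `d̂` of `Gₙ(k) = ∑_{i≤k} λᵢ(M̂ₙ) − c₁(n)c₂(k)` over `k ∈ {0,…,p}`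
satisfies `P(d̂ = d) → 1`. Here `ev M` enumerates the eigenvalues of a symmetric
matrix `M` in decreasing order. -/
theorem bic_order_determination_consistent {Ω : Type*} [MeasurableSpace Ω]
    (μ : Measure Ω) [IsProbabilityMeasure μ]
    (p d : ℕ) (hdp : d ≤ p)
    (Mhat : ℕ → Ω → Matrix (Fin p) (Fin p) ℝ) (M₀ : Matrix (Fin p) (Fin p) ℝ)
    (hM₀ : M₀.PosSemidef) (hrank : M₀.rank = d)
    (hMhat : ∀ n ω, (Mhat n ω).PosSemidef)
    (hOP : ∀ ε : ℝ, 0 < ε → ∃ C : ℝ, ∀ᶠ n : ℕ in atTop,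
      (μ {ω | C ≤ Real.sqrt (n : ℝ) *
        ‖Matrix.toEuclideanCLM (𝕜 := ℝ) (Mhat n ω - M₀)‖}).toReal ≤ ε)
    (ev : Matrix (Fin p) (Fin p) ℝ → Fin p → ℝ)
    (hev : ∀ (M : Matrix (Fin p) (Fin p) ℝ) (hM : M.IsHermitian),
      Antitone (ev M) ∧ ∃ σ : Equiv.Perm (Fin p), ev M = hM.eigenvalues ∘ σ)
    (c₁ : ℕ → Ω → ℝ) (hc₁pos : ∀ n, ∀ᵐ ω ∂μ, 0 < c₁ n ω)
    (hc₁zero : ∀ ε : ℝ, 0 < ε →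
      Tendsto (fun n => (μ {ω | ε ≤ |c₁ n ω|}).toReal) atTop (nhds 0))
    (hc₁inf : ∀ K : ℝ,
      Tendsto (fun n : ℕ => (μ {ω | K < Real.sqrt (n : ℝ) * c₁ n ω}).toReal) atTop (nhds 1))
    (c₂ : ℕ → ℝ) (hc₂ : StrictMono c₂)
    (G : ℕ → Ω → ℕ → ℝ)
    (hG : ∀ n ω kk, G n ω kk =
      (∑ i : Fin p, if (i : ℕ) < kk then ev (Mhat n ω) i else 0) - c₁ n ω * c₂ kk)
    (dhat : ℕ → Ω → ℕ)
    (hdhat : ∀ n ω, dhat n ω ≤ p ∧ ∀ kk ≤ p, G n ω kk ≤ G n ω (dhat n ω)) :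
    Tendsto (fun n => (μ {ω | dhat n ω = d}).toReal) atTop (nhds 1) :=
  bic_order_determination_consistent_general μ p d hdp Mhat M₀ hM₀ hrank hMhat hOP ev hev c₁ hc₁zero
    hc₁inf c₂ hc₂ G hG dhat hdhat
end
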